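/- arXiv:0903.1136 — 10 statements merged into one kernel-verified Lean document; each statement's English description precedes it below -/
import Mathlib

section
/- Let V be a type with decidable equality, a, b ∈ V distinct values, n a natural number, and x : Fin n → V. Then Prec(a,b,x) holds if and only if there exists B : Fin (n+1) → Bool with B 0 = false such that for every i : Fin n: (1) if x i = a then B (i+1) = true; (2) if x i ≠ a then B (i+1) = B i; and (3) if B i = false then x i ≠ b. (Correctness of the ternary-constraint encoding of value precedence for a pair of interchangeable values.) -/
/-- Value precedence for a pair of values: whenever `b` occurs at position `i`,
`a` occurs at some earlier position. -/
def Prec {V : Type*} [DecidableEq V] {n : ℕ} (a b : V) (x : Fin n → V) : Prop :=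
  ∀ i : Fin n, x i = b → ∃ l : Fin n, l < i ∧ x l = a

/-!
The Boolean `B j` of the encoding is forced by its first two conditions to record whether `a`
occurs among `x 0, …, x (j - 1)`; the third condition then says exactly that every `b` is preceded
by an `a`.
-/

section SeenBefore

variable {V : Type*} {n : ℕ} (a : V) (x : Fin n → V)

def SeenBefore (j : Fin (n + 1)) : Prop :=
  ∃ l : Fin n, l.castSucc < j ∧ x l = a

instance [DecidableEq V] : DecidablePred (SeenBefore a x) :=
  fun _ => inferInstanceAs (Decidable (∃ _, _))

variable {a x}

theorem not_seenBefore_zero : ¬ SeenBefore a x 0 := by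
  rintro ⟨l, hl, -⟩
  exact Fin.not_lt_zero _ hl

theorem seenBefore_castSucc_iff (i : Fin n) :
    SeenBefore a x i.castSucc ↔ ∃ l < i, x l = a := by
  simp only [SeenBefore, Fin.castSucc_lt_castSucc_iff]

theorem seenBefore_succ_iff (i : Fin n) :
    SeenBefore a x i.succ ↔ x i = a ∨ SeenBefore a x i.castSucc := by
  simp only [SeenBefore, Fin.castSucc_lt_succ_iff, Fin.castSucc_lt_castSucc_iff, le_iff_lt_or_eq]
  constructor
  · rintro ⟨l, hl | rfl, hla⟩
    exacts [Or.inr ⟨l, hl, hla⟩, Or.inl hla]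
  · rintro (hia | ⟨l, hl, hla⟩)
    exacts [⟨i, Or.inr rfl, hia⟩, ⟨l, Or.inl hl, hla⟩]

def IsSeenFlag (a : V) (x : Fin n → V) (B : Fin (n + 1) → Bool) : Prop :=
  B 0 = false ∧ ∀ i : Fin n,
    (x i = a → B i.succ = true) ∧ (x i ≠ a → B i.succ = B i.castSucc)

theorem IsSeenFlag.eq_true_iff {B : Fin (n + 1) → Bool} (hB : IsSeenFlag a x B)
    (j : Fin (n + 1)) :
    B j = true ↔ SeenBefore a x j := by
  induction j using Fin.induction with
  | zero => simp [hB.1, not_seenBefore_zero]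
  | succ i ih =>
    rw [seenBefore_succ_iff]
    by_cases hia : x i = a
    · simp [(hB.2 i).1 hia, hia]
    · simp [(hB.2 i).2 hia, hia, ih]

theorem isSeenFlag_decide [DecidableEq V] :
    IsSeenFlag a x fun j => decide (SeenBefore a x j) := by
  refine ⟨by simp [not_seenBefore_zero], fun i => ⟨fun hia => ?_, fun hia => ?_⟩⟩ <;>
    simp [seenBefore_succ_iff, hia]

theorem IsSeenFlag.prec_iff [DecidableEq V] {b : V} {B : Fin (n + 1) → Bool}
    (hB : IsSeenFlag a x B) :
    Prec a b x ↔ ∀ i : Fin n, B i.castSucc = false → x i ≠ b := by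
  simp only [Prec, ← seenBefore_castSucc_iff, ← hB.eq_true_iff, ← Bool.not_eq_true, ne_eq,
    not_imp_not]

end SeenBefore

theorem prec_iff_ternary_encoding_general {V : Type*} [DecidableEq V] (a b : V)
    (n : ℕ) (x : Fin n → V) :
    Prec a b x ↔
      ∃ B : Fin (n + 1) → Bool, B 0 = false ∧
        ∀ i : Fin n,
          (x i = a → B i.succ = true) ∧
          (x i ≠ a → B i.succ = B i.castSucc) ∧
          (B i.castSucc = false → x i ≠ b) := by
  constructor
  · intro hprec
    have hB : IsSeenFlag a x fun j => decide (SeenBefore a x j) := isSeenFlag_decide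
    exact ⟨fun j => decide (SeenBefore a x j), hB.1,
      fun i => ⟨(hB.2 i).1, (hB.2 i).2, hB.prec_iff.1 hprec i⟩⟩
  · rintro ⟨B, hB0, hB⟩
    have hflag : IsSeenFlag a x B := ⟨hB0, fun i => ⟨(hB i).1, (hB i).2.1⟩⟩
    exact hflag.prec_iff.2 fun i => (hB i).2.2

/-- Correctness of the ternary-constraint encoding of value precedence for a
pair of interchangeable values. -/
theorem prec_iff_ternary_encoding {V : Type*} [DecidableEq V] (a b : V) (hab : a ≠ b)
    (n : ℕ) (x : Fin n → V) :
    Prec a b x ↔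
      ∃ B : Fin (n + 1) → Bool, B 0 = false ∧
        ∀ i : Fin n,
          (x i = a → B i.succ = true) ∧
          (x i ≠ a → B i.succ = B i.castSucc) ∧
          (B i.castSucc = false → x i ≠ b) :=
  prec_iff_ternary_encoding_general a b n x
end

section
/- Let V be a type with decidable equality and a, b ∈ V distinct. Let Dx : Fin n → Finset V be nonempty domains and Db : Fin (n+1) → Finset Bool nonempty domains with Db 0 = {false}. For i : Fin n let C_i be the set of triples (w,p,q) ∈ V × Bool × Bool such that (w = a → q = true), (w ≠ a → q = p), and (p = false → w ≠ b). Assume each C_i is GAC with respect to the domains (Dx i, Db i, Db (i+1)), i.e. every value in each of the three domains occurs in some triple of C_i whose three components lie in the respective domains. Then the constraint Prec(a,b,·) is GAC with respect to Dx: for every i : Fin n and every w ∈ Dx i there exists x : Fin n → V with x j ∈ Dx j for all j, x i = w, and Prec(a,b,x). (Because the chain of ternary constraints is Berge-acyclic, enforcing GAC on the ternary constraints achieves GAC on the global precedence constraint.) -/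
/-- The ternary constraint `C` of the encoding of value precedence. -/
def TernC {V : Type*} [DecidableEq V] (a b : V) (w : V) (p q : Bool) : Prop :=
  (w = a → q = true) ∧ (w ≠ a → q = p) ∧ (p = false → w ≠ b)

/-!
The ternary constraints form a chain `x₀ – y₁ – x₁ – y₂ – ⋯` in which consecutive constraints
share a single variable, so their constraint hypergraph is Berge-acyclic. A value supported in one
constraint can therefore be extended constraint by constraint, outwards in both directions, to a
solution of the whole chain, and the Boolean variables of such a solution record whether `a` has
already occurred, which forces value precedence.
-/

section Chain

variable {α β : Type*} {n : ℕ}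

open Fin

structure IsChainSolution (R : Fin n → α → β → β → Prop) (D : Fin n → Set α)
    (E : Fin (n + 1) → Set β) (x : Fin n → α) (y : Fin (n + 1) → β) : Prop where
  mem_dom : ∀ j, x j ∈ D j
  mem_link : ∀ k, y k ∈ E k
  rel : ∀ j, R j (x j) (y j.castSucc) (y j.succ)

theorem IsChainSolution.cons {R : Fin (n + 1) → α → β → β → Prop}
    {D : Fin (n + 1) → Set α} {E : Fin (n + 2) → Set β} {x : Fin n → α} {y : Fin (n + 1) → β}
    {w : α} {p : β} (hw : w ∈ D 0) (hp : p ∈ E 0) (hR : R 0 w p (y 0))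
    (h : IsChainSolution (fun j ↦ R j.succ) (fun j ↦ D j.succ) (fun k ↦ E k.succ) x y) :
    IsChainSolution R D E (cons w x) (cons p y) where
  mem_dom j := j.cases hw h.mem_dom
  mem_link k := k.cases hp h.mem_link
  rel j := j.cases hR fun j ↦ by simpa [← succ_castSucc] using h.rel j

theorem exists_isChainSolution_apply_zero_eq {R : Fin n → α → β → β → Prop}
    {D : Fin n → Set α} {E : Fin (n + 1) → Set β}
    (forward : ∀ j, ∀ p ∈ E j.castSucc, ∃ w ∈ D j, ∃ q ∈ E j.succ, R j w p q) :
    ∀ p ∈ E 0, ∃ x y, IsChainSolution R D E x y ∧ y 0 = p := by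
  induction n with
  | zero =>
    intro p hp
    refine ⟨elim0, fun _ ↦ p, ⟨fun j ↦ j.elim0, fun k ↦ ?_, fun j ↦ j.elim0⟩, rfl⟩
    rwa [fin_one_eq_zero k]
  | succ n ih =>
    intro p hp
    obtain ⟨w, hw, q, hq, hR⟩ := forward 0 p hp
    obtain ⟨x, y, hsol, rfl⟩ := ih (R := fun j ↦ R j.succ) (D := fun j ↦ D j.succ)
      (E := fun k ↦ E k.succ) (fun j ↦ forward j.succ) q hq
    exact ⟨cons w x, cons p y, hsol.cons hw hp hR, rfl⟩

theorem exists_isChainSolution_apply_eq {R : Fin n → α → β → β → Prop}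
    {D : Fin n → Set α} {E : Fin (n + 1) → Set β}
    (forward : ∀ j, ∀ p ∈ E j.castSucc, ∃ w ∈ D j, ∃ q ∈ E j.succ, R j w p q)
    (backward : ∀ j, ∀ q ∈ E j.succ, ∃ w ∈ D j, ∃ p ∈ E j.castSucc, R j w p q)
    (local_support : ∀ j, ∀ w ∈ D j, ∃ p ∈ E j.castSucc, ∃ q ∈ E j.succ, R j w p q) :
    ∀ i, ∀ w ∈ D i, ∃ x y, IsChainSolution R D E x y ∧ x i = w := by
  induction n with
  | zero => exact fun i ↦ i.elim0
  | succ n ih =>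
    intro i
    refine i.cases (fun w hw ↦ ?_) fun i w hw ↦ ?_
    · obtain ⟨p, hp, q, hq, hR⟩ := local_support 0 w hw
      obtain ⟨x, y, hsol, rfl⟩ :=
        exists_isChainSolution_apply_zero_eq (R := fun j ↦ R j.succ) (D := fun j ↦ D j.succ)
          (E := fun k ↦ E k.succ) (fun j ↦ forward j.succ) q hq
      exact ⟨cons w x, cons p y, hsol.cons hw hp hR, rfl⟩
    · obtain ⟨x, y, hsol, rfl⟩ := ih (R := fun j ↦ R j.succ) (D := fun j ↦ D j.succ)
        (E := fun k ↦ E k.succ) (fun j ↦ forward j.succ) (fun j ↦ backward j.succ)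
        (fun j ↦ local_support j.succ) i w hw
      obtain ⟨w₀, hw₀, p, hp, hR⟩ := backward 0 (y 0) (hsol.mem_link 0)
      exact ⟨cons w₀ x, cons p y, hsol.cons hw₀ hp hR, rfl⟩

end Chain

section Precedence

variable {V : Type*} [DecidableEq V] {a b : V} {n : ℕ} {x : Fin n → V} {y : Fin (n + 1) → Bool}

theorem exists_lt_eq_of_ternC_chain (h₀ : y 0 = false)
    (h : ∀ j, TernC a b (x j) (y j.castSucc) (y j.succ)) :
    ∀ k, y k = true → ∃ l : Fin n, l.castSucc < k ∧ x l = a := by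
  refine Fin.induction (by simp [h₀]) fun k ih hk ↦ ?_
  obtain ⟨-, h_ne_a, -⟩ := h k
  by_cases hxk : x k = a
  · exact ⟨k, Fin.castSucc_lt_succ, hxk⟩
  · obtain ⟨l, hl, hla⟩ := ih (h_ne_a hxk ▸ hk)
    exact ⟨l, hl.trans Fin.castSucc_lt_succ, hla⟩

theorem prec_of_ternC_chain (h₀ : y 0 = false)
    (h : ∀ j, TernC a b (x j) (y j.castSucc) (y j.succ)) : Prec a b x := by
  intro i hi
  have hy : y i.castSucc = true := by
    by_contra hy
    exact (h i).2.2 (by simpa using hy) hi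
  obtain ⟨l, hl, hla⟩ := exists_lt_eq_of_ternC_chain h₀ h _ hy
  exact ⟨l, Fin.castSucc_lt_castSucc_iff.mp hl, hla⟩

end Precedence

theorem gac_ternary_implies_gac_prec_general {V : Type*} [DecidableEq V] (a b : V)
    (n : ℕ) (Dx : Fin n → Finset V) (Db : Fin (n + 1) → Finset Bool)
    (hDb0 : Db 0 = {false})
    (hgac1 : ∀ i : Fin n, ∀ w ∈ Dx i,
      ∃ p ∈ Db i.castSucc, ∃ q ∈ Db i.succ, TernC a b w p q)
    (hgac2 : ∀ i : Fin n, ∀ p ∈ Db i.castSucc,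
      ∃ w ∈ Dx i, ∃ q ∈ Db i.succ, TernC a b w p q)
    (hgac3 : ∀ i : Fin n, ∀ q ∈ Db i.succ,
      ∃ w ∈ Dx i, ∃ p ∈ Db i.castSucc, TernC a b w p q) :
    ∀ i : Fin n, ∀ w ∈ Dx i,
      ∃ x : Fin n → V, Prec a b x ∧ x i = w ∧ ∀ j, x j ∈ Dx j := by
  intro i w hw
  obtain ⟨x, y, hsol, hxi⟩ := exists_isChainSolution_apply_eq (R := fun _ ↦ TernC a b)
    (D := fun j ↦ Dx j) (E := fun k ↦ Db k) hgac2 hgac3 hgac1 i w hw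
  have hy₀ : y 0 = false := by simpa [hDb0] using hsol.mem_link 0
  exact ⟨x, prec_of_ternC_chain hy₀ hsol.rel, hxi, hsol.mem_dom⟩

/-- Enforcing GAC on the Berge-acyclic chain of ternary constraints achieves GAC
on the global value precedence constraint. -/
theorem gac_ternary_implies_gac_prec {V : Type*} [DecidableEq V] (a b : V) (hab : a ≠ b)
    (n : ℕ) (Dx : Fin n → Finset V) (Db : Fin (n + 1) → Finset Bool)
    (hDx : ∀ i, (Dx i).Nonempty) (hDb : ∀ i, (Db i).Nonempty)
    (hDb0 : Db 0 = {false})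
    (hgac1 : ∀ i : Fin n, ∀ w ∈ Dx i,
      ∃ p ∈ Db i.castSucc, ∃ q ∈ Db i.succ, TernC a b w p q)
    (hgac2 : ∀ i : Fin n, ∀ p ∈ Db i.castSucc,
      ∃ w ∈ Dx i, ∃ q ∈ Db i.succ, TernC a b w p q)
    (hgac3 : ∀ i : Fin n, ∀ q ∈ Db i.succ,
      ∃ w ∈ Dx i, ∃ p ∈ Db i.castSucc, TernC a b w p q) :
    ∀ i : Fin n, ∀ w ∈ Dx i,
      ∃ x : Fin n → V, Prec a b x ∧ x i = w ∧ ∀ j, x j ∈ Dx j :=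
  gac_ternary_implies_gac_prec_general a b n Dx Db hDb0 hgac1 hgac2 hgac3
end

section
/- Let V be a type with decidable equality, v : Fin m → V injective, and x : Fin n → V. Then the global constraint Prec([v 0,…,v (m−1)], x) holds if and only if there exists Y : Fin (n+1) → ℕ with Y 0 = 0 such that for every i : Fin n: (1) for every j : Fin m, if x i = v j then (j : ℕ) ≤ Y i; and (2) Y (i+1) = Y i + 1 if Y i < m and x i = v ⟨Y i⟩, and Y (i+1) = Y i otherwise. (Correctness of the ternary-constraint encoding of value precedence for multiple interchangeable values, where Y i records the number of values of the precedence order already used before index i.) -/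
/-- Global value precedence over an (injective) family of values `v 0, …, v (m-1)`. -/
def PrecAll {V : Type*} [DecidableEq V] {n m : ℕ} (v : Fin m → V) (x : Fin n → V) : Prop :=
  ∀ j k : Fin m, j < k → Prec (v j) (v k) x

/-!
`Y i` counts how many of the values `v 0, v 1, …` have already made their first appearance, in
order, before position `i`. By induction along the sequence, every `v j` with `j < Y i` occurs
before `i`; this gives precedence from the encoding. Conversely, under precedence, a value `v j`
with `j > Y i` cannot appear at `i`, since `v (Y i)` would have to appear earlier and would then
already have been counted; so the counter dominates the index of every value seen so far.
-/

def precStep {V : Type*} [DecidableEq V] {m : ℕ} (v : Fin m → V) (c : ℕ) (a : V) : ℕ :=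
  if ∃ j : Fin m, (j : ℕ) = c ∧ a = v j then c + 1 else c

section precStep

variable {V : Type*} [DecidableEq V] {m : ℕ} (v : Fin m → V)

theorem le_precStep (c : ℕ) (a : V) : c ≤ precStep v c a := by
  unfold precStep
  split_ifs <;> omega

theorem precStep_le_succ (c : ℕ) (a : V) : precStep v c a ≤ c + 1 := by
  unfold precStep
  split_ifs <;> omega

theorem precStep_eq_succ {a : V} {j : Fin m} (h : a = v j) : precStep v j a = j + 1 :=
  if_pos ⟨j, rfl, h⟩

theorem lt_precStep {c : ℕ} {a : V} {j : Fin m} (h : (j : ℕ) < precStep v c a) :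
    (j : ℕ) < c ∨ a = v j := by
  unfold precStep at h
  split_ifs at h with hstep
  · obtain ⟨j', hj', ha⟩ := hstep
    rcases Nat.lt_succ_iff_lt_or_eq.mp h with hlt | heq
    · exact .inl hlt
    · exact .inr (Fin.ext (heq.trans hj'.symm) ▸ ha)
  · exact .inl h

end precStep

section counter

variable {V : Type*} [DecidableEq V] {n m : ℕ} {v : Fin m → V} {x : Fin n → V}
  {Y : Fin (n + 1) → ℕ}

theorem exists_lt_of_lt_counter (hY0 : Y 0 = 0)
    (hY : ∀ i, Y i.succ = precStep v (Y i.castSucc) (x i)) (k : Fin (n + 1)) (j : Fin m)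
    (hj : (j : ℕ) < Y k) : ∃ l : Fin n, l.castSucc < k ∧ x l = v j := by
  induction k using Fin.induction with
  | zero => omega
  | succ i ih =>
    rcases lt_precStep v (hY i ▸ hj) with hlt | hx
    · obtain ⟨l, hl, hxl⟩ := ih hlt
      exact ⟨l, hl.trans i.castSucc_lt_succ, hxl⟩
    · exact ⟨i, i.castSucc_lt_succ, hx⟩

theorem lt_counter_of_precAll (hP : PrecAll v x)
    (hY : ∀ i, Y i.succ = precStep v (Y i.castSucc) (x i)) (k : Fin (n + 1)) (l : Fin n)
    (hl : l.castSucc < k) (j : Fin m) (hj : x l = v j) : (j : ℕ) < Y k := by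
  induction k using Fin.induction generalizing l j with
  | zero => exact absurd hl (Fin.not_lt_zero _)
  | succ i ih =>
    have hmono : Y i.castSucc ≤ Y i.succ := hY i ▸ le_precStep v _ _
    rcases (Fin.castSucc_lt_succ_iff.mp hl).lt_or_eq with hli | rfl
    · exact (ih l (Fin.castSucc_lt_castSucc_iff.mpr hli) j hj).trans_le hmono
    rcases lt_trichotomy (j : ℕ) (Y l.castSucc) with hlt | heq | hgt
    · exact hlt.trans_le hmono
    · rw [hY, ← heq, precStep_eq_succ v hj]
      exact Nat.lt_succ_self _
    · -- `v (Y l)` precedes `v j`, so it was read before `l` and is already counted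
      obtain ⟨l', hl', hx'⟩ := hP ⟨Y l.castSucc, hgt.trans j.isLt⟩ j hgt l hj
      exact absurd (ih l' (Fin.castSucc_lt_castSucc_iff.mpr hl') _ hx') (lt_irrefl _)

end counter

theorem precAll_iff_ternary_encoding_general {V : Type*} [DecidableEq V] {n m : ℕ}
    (v : Fin m → V) (x : Fin n → V) :
    PrecAll v x ↔
      ∃ Y : Fin (n + 1) → ℕ, Y 0 = 0 ∧
        ∀ i : Fin n,
          (∀ j : Fin m, x i = v j → (j : ℕ) ≤ Y i.castSucc) ∧
          (Y i.succ =
            if ∃ j : Fin m, (j : ℕ) = Y i.castSucc ∧ x i = v j then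
              Y i.castSucc + 1
            else Y i.castSucc) := by
  constructor
  · intro hP
    let Y : Fin (n + 1) → ℕ := Fin.induction 0 fun i c => precStep v c (x i)
    have hY : ∀ i, Y i.succ = precStep v (Y i.castSucc) (x i) := fun i => Fin.induction_succ ..
    refine ⟨Y, Fin.induction_zero .., fun i => ⟨fun j hj => ?_, hY i⟩⟩
    have hlt := lt_counter_of_precAll hP hY i.succ i i.castSucc_lt_succ j hj
    have hle := hY i ▸ precStep_le_succ v (Y i.castSucc) (x i)
    omega
  · rintro ⟨Y, hY0, hY⟩ j k hjk i hi
    obtain ⟨l, hl, hxl⟩ := exists_lt_of_lt_counter hY0 (fun i => (hY i).2) i.castSucc j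
      (Fin.lt_def.mp hjk |>.trans_le ((hY i).1 k hi))
    exact ⟨l, Fin.castSucc_lt_castSucc_iff.mp hl, hxl⟩

/-- Correctness of the ternary-constraint encoding of global value precedence
for multiple interchangeable values: `Y i` records the number of values of the
precedence order already used strictly before index `i`. -/
theorem precAll_iff_ternary_encoding {V : Type*} [DecidableEq V] {n m : ℕ}
    (v : Fin m → V) (hv : Function.Injective v) (x : Fin n → V) :
    PrecAll v x ↔
      ∃ Y : Fin (n + 1) → ℕ, Y 0 = 0 ∧
        ∀ i : Fin n,
          (∀ j : Fin m, x i = v j → (j : ℕ) ≤ Y i.castSucc) ∧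
          (Y i.succ =
            if ∃ j : Fin m, (j : ℕ) = Y i.castSucc ∧ x i = v j then
              Y i.castSucc + 1
            else Y i.castSucc) :=
  precAll_iff_ternary_encoding_general v x
end

section
/- (Theorem 4.) Let x : Fin n → Fin m, and for each value j : Fin m define the column col_j : Fin n → Bool by col_j i = decide (x i = j). Then the global value-precedence constraint Prec([0,1,…,m−1], x) holds if and only if for every j with j + 1 < m one has col_j ≥lex col_{j+1}. (Value precedence over interchangeable values is equivalent to lexicographically ordering the columns of the 0/1 matrix B with B i j = 1 iff x i = j.) -/
/-- Lexicographic (non-strict) comparison of Boolean columns, index `0` most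
significant, `false < true`: either the columns are equal, or at the least
index where they differ the first is `true` and the second is `false`. -/
def LexGE {n : ℕ} (c c' : Fin n → Bool) : Prop :=
  c = c' ∨ ∃ i : Fin n, (∀ l : Fin n, l < i → c l = c' l) ∧ c i = true ∧ c' i = false

theorem Fin.rel_of_forall_rel_succ_of_lt {α : Type*} {m : ℕ} {r : α → α → Prop}
    (hr : ∀ {a b c}, r a b → r b c → r a c) {f : Fin m → α}
    (h : ∀ (j : Fin m) (hj : (j : ℕ) + 1 < m), r (f j) (f ⟨j + 1, hj⟩))
    {j k : Fin m} (hjk : j < k) : r (f j) (f k) := by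
  obtain ⟨k, hk⟩ := k
  replace hjk : (j : ℕ) + 1 ≤ k := hjk
  induction k, hjk using Nat.le_induction with
  | base => exact h j hk
  | succ k hjk ih => exact hr (ih (by omega)) (h ⟨k, by omega⟩ hk)

theorem LexGE.iff_forall_exists_lt_of_disjoint {n : ℕ} {c c' : Fin n → Bool}
    (hdisj : ∀ i, c i = false ∨ c' i = false) :
    LexGE c c' ↔ ∀ i, c' i = true → ∃ l < i, c l = true := by
  constructor
  · rintro (rfl | ⟨p, hbefore, hp, hp'⟩) i hi
    · simpa [hi] using hdisj i
    · have hpi : p ≤ i := not_lt.mp fun hip => by simpa [hi, hbefore i hip] using hdisj i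
      have hne : p ≠ i := by rintro rfl; simp [hi] at hp'
      exact ⟨p, lt_of_le_of_ne hpi hne, hp⟩
  · intro hprec
    have hcol' : ∀ l, (∀ l' ≤ l, c l' = false) → c' l = false := fun l hl => by
      by_contra h
      obtain ⟨l', hl', hcl'⟩ := hprec l (by simpa using h)
      simp [hl l' hl'.le] at hcl'
    by_cases hc : ∃ i, c i = true
    · obtain ⟨p, hp, hmin⟩ := WellFounded.has_min wellFounded_lt {i | c i = true} hc
      have hbefore : ∀ l < p, c l = false := fun l hl => by simpa using fun h => hmin l h hl
      refine Or.inr ⟨p, fun l hl => ?_, hp, ?_⟩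
      · rw [hbefore l hl, hcol' l fun l' hl' => hbefore l' (hl'.trans_lt hl)]
      · simpa [show c p = true from hp] using hdisj p
    · push Not at hc
      have hcf : ∀ l, c l = false := by simpa using hc
      exact Or.inl (funext fun l => by rw [hcf l, hcol' l fun l' _ => hcf l'])

section Prec

variable {V : Type*} [DecidableEq V] {n : ℕ}

theorem Prec.trans {a b c : V} {x : Fin n → V} (hab : Prec a b x) (hbc : Prec b c x) :
    Prec a c x := fun i hi =>
  let ⟨l, hli, hl⟩ := hbc i hi
  let ⟨l', hl'l, hl'⟩ := hab l hl
  ⟨l', hl'l.trans hli, hl'⟩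

theorem prec_iff_lexGE {a b : V} (hab : a ≠ b) (x : Fin n → V) :
    Prec a b x ↔ LexGE (fun i => decide (x i = a)) (fun i => decide (x i = b)) := by
  rw [LexGE.iff_forall_exists_lt_of_disjoint]
  · simp [Prec]
  · intro i
    by_cases hi : x i = a <;> simp [hi, hab]

theorem precAll_iff_forall_prec_succ {m : ℕ} (v : Fin m → V) (x : Fin n → V) :
    PrecAll v x ↔ ∀ (j : Fin m) (h : (j : ℕ) + 1 < m), Prec (v j) (v ⟨j + 1, h⟩) x :=
  ⟨fun hx j _ => hx _ _ (Fin.lt_def.mpr (Nat.lt_succ_self j)),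
    fun hx _ _ => Fin.rel_of_forall_rel_succ_of_lt (r := (Prec · · x)) Prec.trans hx⟩

end Prec

/-- (Theorem 4) Value precedence over fully interchangeable values `0,…,m-1`
is equivalent to lexicographically ordering the columns of the characteristic
0/1 matrix `B` with `B i j = 1` iff `x i = j`. -/
theorem precAll_iff_lex_columns {n m : ℕ} (x : Fin n → Fin m) :
    PrecAll (id : Fin m → Fin m) x ↔
      ∀ (j : Fin m) (h : (j : ℕ) + 1 < m),
        LexGE (fun i => decide (x i = j)) (fun i => decide (x i = ⟨(j : ℕ) + 1, h⟩)) := by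
  rw [precAll_iff_forall_prec_succ]
  refine forall₂_congr fun j h => prec_iff_lexGE ?_ x
  simp [Fin.ext_iff]
end

section
/- Let x : Fin n → Fin m be surjective, and define Z : Fin m → ℕ by Z j = the least i such that x i = j (which exists by surjectivity). Then the global value-precedence constraint Prec([0,1,…,m−1], x) holds if and only if Z is strictly monotone (Z j < Z k whenever j < k). (For surjection problems, Puget's dual variables recording the first index using each value, together with the ordering Z j < Z (j+1), ensure value precedence.) -/
def positionsOf {V : Type*} {n : ℕ} (x : Fin n → V) (a : V) : Set ℕ :=
  {i : ℕ | ∃ h : i < n, x ⟨i, h⟩ = a}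

theorem prec_iff_lt_of_isLeast {V : Type*} [DecidableEq V] {n : ℕ} {x : Fin n → V} {a b : V}
    {za zb : ℕ} (ha : IsLeast (positionsOf x a) za) (hb : IsLeast (positionsOf x b) zb) :
    Prec a b x ↔ za < zb := by
  constructor
  · intro hab
    obtain ⟨hzb, hxb⟩ := hb.1
    obtain ⟨l, hl, hxl⟩ := hab ⟨zb, hzb⟩ hxb
    exact (ha.2 ⟨l.isLt, hxl⟩).trans_lt hl
  · intro hlt i hxi
    obtain ⟨hza, hxa⟩ := ha.1
    exact ⟨⟨za, hza⟩, hlt.trans_le (hb.2 ⟨i.isLt, hxi⟩), hxa⟩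

theorem precAll_iff_strictMono_firstIndex_general {n m : ℕ} (x : Fin n → Fin m)
    (Z : Fin m → ℕ)
    (hZ : ∀ j : Fin m, IsLeast {i : ℕ | ∃ h : i < n, x ⟨i, h⟩ = j} (Z j)) :
    PrecAll (id : Fin m → Fin m) x ↔ StrictMono Z :=
  forall₂_congr fun j k => imp_congr_right fun _ => prec_iff_lt_of_isLeast (hZ j) (hZ k)

/-- For surjection problems, global value precedence is equivalent to the
strict monotonicity of Puget's dual variables `Z j`, recording the first index
using each value `j`. -/
theorem precAll_iff_strictMono_firstIndex {n m : ℕ} (x : Fin n → Fin m)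
    (hsurj : Function.Surjective x) (Z : Fin m → ℕ)
    (hZ : ∀ j : Fin m, IsLeast {i : ℕ | ∃ h : i < n, x ⟨i, h⟩ = j} (Z j)) :
    PrecAll (id : Fin m → Fin m) x ↔ StrictMono Z :=
  precAll_iff_strictMono_firstIndex_general x Z hZ
end

section
/- Puget's binary symmetry-breaking constraints for interchangeable values may achieve arc consistency without pruning all values pruned by the global precedence constraint. Concretely, take variables X_1,…,X_7 with domains D(X_1)={1}, D(X_2)={1,2}, D(X_3)={1,3}, D(X_4)={3,4}, D(X_5)={2}, D(X_6)={3}, D(X_7)={4}, and dual variables Z_1,…,Z_4 with domains D(Z_1)={1}, D(Z_2)={2,5}, D(Z_3)={3,4,6}, D(Z_4)={4,7}. Consider the binary constraints: for all 1 ≤ i ≤ 7 and 1 ≤ j ≤ 4, (X_i = j → Z_j ≤ i) and (Z_j = i → X_i = j), and for 1 ≤ k ≤ 3, Z_k < Z_{k+1}. Then: (a) every one of these binary constraints is arc consistent with respect to the given domains (each value of each of its two variables participates in a satisfying pair drawn from the domains); but (b) 1 ∈ D(X_2) and no tuple x with x_i ∈ D(X_i) for all i and x_2 = 1 satisfies the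 global value-precedence constraint Prec([1,2,3,4], x). -/
/-- Arc consistency of a binary constraint `R` between two finite domains:
every value of either variable participates in a satisfying pair. -/
def AC2 (R : ℕ → ℕ → Prop) (D₁ D₂ : Finset ℕ) : Prop :=
  (∀ w ∈ D₁, ∃ z ∈ D₂, R w z) ∧ (∀ z ∈ D₂, ∃ w ∈ D₁, R w z)

/-!
Part (a) is a finite check. For (b), `X₁ = X₂ = 1`, `X₃ ∈ {1, 3}` and `X₄ ∈ {3, 4}` leave no
room for the value `2` among the first three positions, so precedence of `2` over `3` forbids `3`
up to position four; then `X₄ = 4` has no `3` before it, violating precedence of `3` over `4`. (`Xᵢ` is `x (i - 1)` in the statement.)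
-/

instance AC2.decidable (R : ℕ → ℕ → Prop) [DecidableRel R] (D₁ D₂ : Finset ℕ) :
    Decidable (AC2 R D₁ D₂) :=
  inferInstanceAs (Decidable (_ ∧ _))

theorem Prec.ne_of_le_of_forall_lt_ne {V : Type*} [DecidableEq V] {n : ℕ} {a b : V}
    {x : Fin n → V} (h : Prec a b x) {p : Fin n} (ha : ∀ l < p, x l ≠ a) {i : Fin n}
    (hi : i ≤ p) : x i ≠ b := fun hb =>
  let ⟨l, hl, hla⟩ := h i hb
  ha l (hl.trans_le hi) hla

/-- Puget's binary symmetry-breaking constraints for interchangeable values may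
all be arc consistent while the global precedence constraint prunes more:
here `1 ∈ D(X₂)`, all the binary constraints are AC, but no tuple within the
domains with `X₂ = 1` satisfies `Prec([1,2,3,4], ·)`. -/
theorem puget_ac_weaker_than_global_prec :
    let DX : Fin 7 → Finset ℕ := ![{1}, {1, 2}, {1, 3}, {3, 4}, {2}, {3}, {4}]
    let DZ : Fin 4 → Finset ℕ := ![{1}, {2, 5}, {3, 4, 6}, {4, 7}]
    let v : Fin 4 → ℕ := fun j => (j : ℕ) + 1
    (∀ (i : Fin 7) (j : Fin 4),
      AC2 (fun w z => w = (j : ℕ) + 1 → z ≤ (i : ℕ) + 1) (DX i) (DZ j)) ∧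
    (∀ (i : Fin 7) (j : Fin 4),
      AC2 (fun w z => z = (i : ℕ) + 1 → w = (j : ℕ) + 1) (DX i) (DZ j)) ∧
    (∀ (k : Fin 4) (h : (k : ℕ) + 1 < 4),
      AC2 (fun z z' => z < z') (DZ k) (DZ ⟨(k : ℕ) + 1, h⟩)) ∧
    (1 : ℕ) ∈ DX 1 ∧
    ¬ ∃ x : Fin 7 → ℕ, (∀ i, x i ∈ DX i) ∧ x 1 = 1 ∧ PrecAll v x := by
  intro DX DZ v
  refine ⟨by decide, by decide, by decide, by decide, ?_⟩
  rintro ⟨x, hdom, hx1, hprec⟩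
  have hx0 : x 0 = 1 := by simpa [DX] using hdom 0
  have hx2 : x 2 = 1 ∨ x 2 = 3 := by simpa [DX] using hdom 2
  have hx3 : x 3 = 3 ∨ x 3 = 4 := by simpa [DX] using hdom 3
  have no_two : ∀ l < (3 : Fin 7), x l ≠ 2 := by
    intro l hl
    fin_cases l <;> simp at hl ⊢ <;> omega
  have no_three (l : Fin 7) (hl : l ≤ 3) : x l ≠ 3 :=
    (hprec 1 2 (by decide)).ne_of_le_of_forall_lt_ne no_two hl
  have no_four : x 3 ≠ 4 :=
    (hprec 2 3 (by decide)).ne_of_le_of_forall_lt_ne (fun l hl => no_three l hl.le) le_rfl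
  exact hx3.elim (no_three 3 le_rfl) no_four
end

section
/- Value precedence breaks all symmetry between a pair of interchangeable values: let V be a type with decidable equality, a, b ∈ V distinct, x : Fin n → V, and x' = (Equiv.swap a b) ∘ x. Then at least one of Prec(a,b,x) and Prec(a,b,x') holds; and if both hold, then x = x'. (Hence each orbit under swapping a and b contains exactly one sequence satisfying the precedence constraint.) -/
namespace Prec

variable {V : Type*} [DecidableEq V] {n : ℕ} {a b : V} {x : Fin n → V}

theorem swap_comp_iff : Prec a b (Equiv.swap a b ∘ x) ↔ Prec b a x := by
  simp only [Prec, Function.comp_apply, Equiv.swap_apply_eq_iff, Equiv.swap_apply_left,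
    Equiv.swap_apply_right]

/-- Two offending positions, a `b` with no earlier `a` and an `a` with no earlier `b`,
cannot be ordered either way. -/
theorem total (hab : a ≠ b) (x : Fin n → V) : Prec a b x ∨ Prec b a x := by
  by_contra h
  unfold Prec at h
  push Not at h
  obtain ⟨⟨i, hib, hi⟩, ⟨j, hja, hj⟩⟩ := h
  rcases lt_trichotomy i j with hij | rfl | hji
  · exact hj i hij hib
  · exact hab (hja.symm.trans hib)
  · exact hi j hji hja

/-- An occurrence of `b` would need an earlier `a`, which would need an earlier `b`, and so
on down the well-founded order of positions. -/
theorem apply_ne (hpab : Prec a b x) (hpba : Prec b a x) (i : Fin n) : x i ≠ b := by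
  induction i using WellFoundedLT.induction with
  | ind i ih =>
    intro hib
    obtain ⟨l, hli, hla⟩ := hpab i hib
    obtain ⟨k, hkl, hkb⟩ := hpba l hla
    exact ih k (hkl.trans hli) hkb

end Prec

/-- Value precedence breaks all symmetry between a pair of interchangeable
values: each orbit under swapping `a` and `b` contains exactly one sequence
satisfying the precedence constraint. -/
theorem prec_breaks_swap_symmetry {V : Type*} [DecidableEq V] (a b : V) (hab : a ≠ b)
    (n : ℕ) (x : Fin n → V) :
    (Prec a b x ∨ Prec a b ((Equiv.swap a b) ∘ x)) ∧
    (Prec a b x → Prec a b ((Equiv.swap a b) ∘ x) → x = (Equiv.swap a b) ∘ x) := by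
  simp only [Prec.swap_comp_iff]
  refine ⟨Prec.total hab x, fun hpab hpba => funext fun i => ?_⟩
  exact (Equiv.swap_apply_of_ne_of_ne (hpba.apply_ne hpab i) (hpab.apply_ne hpba i)).symm
end

section
/- Global value precedence breaks all symmetry among fully interchangeable values: for every x : Fin n → Fin m there exists exactly one y : Fin n → Fin m such that y = σ ∘ x for some permutation σ of Fin m and y satisfies the global value-precedence constraint Prec([0,1,…,m−1], y). -/
open Finset

/-- `⊤` stands for the sentinel `n` in `min ({i | x i = a} ∪ {n})`. -/
def firstOcc {V : Type*} [DecidableEq V] {n : ℕ} (x : Fin n → V) (a : V) : WithTop (Fin n) :=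
  (univ.filter fun i => x i = a).min

section FirstOcc

variable {V : Type*} [DecidableEq V] {n : ℕ} {x : Fin n → V}

lemma firstOcc_le_of_apply_eq {a : V} {i : Fin n} (h : x i = a) : firstOcc x a ≤ i :=
  min_le (mem_filter.2 ⟨mem_univ i, h⟩)

lemma apply_eq_of_firstOcc_eq {a : V} {p : Fin n} (h : firstOcc x a = p) : x p = a :=
  (mem_filter.1 (mem_of_min h)).2

lemma exists_firstOcc_eq_of_le {a : V} {i : Fin n} (h : firstOcc x a ≤ i) :
    ∃ p : Fin n, firstOcc x a = p ∧ p ≤ i := by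
  obtain ⟨p, hp⟩ := WithTop.ne_top_iff_exists.1 (ne_top_of_le_ne_top WithTop.coe_ne_top h)
  exact ⟨p, hp.symm, WithTop.coe_le_coe.1 (hp ▸ h)⟩

lemma eq_apply_of_firstOcc_eq {a : V} {i : Fin n} (h : firstOcc x a = firstOcc x (x i)) :
    a = x i := by
  obtain ⟨p, hp, -⟩ := exists_firstOcc_eq_of_le (firstOcc_le_of_apply_eq (x := x) rfl)
  rw [← apply_eq_of_firstOcc_eq (h.trans hp), apply_eq_of_firstOcc_eq hp]

lemma firstOcc_equiv_comp {W : Type*} [DecidableEq W] (e : V ≃ W) (x : Fin n → V) :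
    firstOcc (e ∘ x) = firstOcc x ∘ e.symm := by
  ext1 b
  simp only [firstOcc, Function.comp_apply, Equiv.eq_symm_apply]

theorem precAll_iff_monotone_firstOcc {m : ℕ} {v : Fin m → V} (hv : Function.Injective v)
    (x : Fin n → V) : PrecAll v x ↔ Monotone (firstOcc x ∘ v) := by
  rw [monotone_iff_forall_lt]
  refine ⟨fun h j k hjk => ?_, fun h j k hjk i hi => ?_⟩
  · simp only [Function.comp_apply]
    cases hk : firstOcc x (v k) with
    | top => exact le_top
    | coe p =>
      obtain ⟨l, hlp, hl⟩ := h j k hjk p (apply_eq_of_firstOcc_eq hk)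
      exact (firstOcc_le_of_apply_eq hl).trans (WithTop.coe_le_coe.2 hlp.le)
  · obtain ⟨p, hp, hpi⟩ := exists_firstOcc_eq_of_le ((h hjk).trans (firstOcc_le_of_apply_eq hi))
    have hxp : x p = v j := apply_eq_of_firstOcc_eq hp
    refine ⟨p, hpi.lt_of_ne ?_, hxp⟩
    rintro rfl
    exact hjk.ne (hv (hxp.symm.trans hi))

end FirstOcc

section Symmetry

variable {n m : ℕ}

lemma precAll_id_perm_comp_iff (σ : Equiv.Perm (Fin m)) (x : Fin n → Fin m) :
    PrecAll id (σ ∘ x) ↔ Monotone (firstOcc x ∘ ⇑σ⁻¹) := by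
  rw [precAll_iff_monotone_firstOcc Function.injective_id, firstOcc_equiv_comp]
  rfl

lemma precAll_id_sort_inv_comp (x : Fin n → Fin m) :
    PrecAll id (⇑(Tuple.sort (firstOcc x))⁻¹ ∘ x) := by
  rw [precAll_id_perm_comp_iff, inv_inv]
  exact Tuple.monotone_sort _

theorem perm_comp_eq_of_precAll_id {σ τ : Equiv.Perm (Fin m)} {x : Fin n → Fin m}
    (hσ : PrecAll id (σ ∘ x)) (hτ : PrecAll id (τ ∘ x)) : σ ∘ x = τ ∘ x := by
  rw [precAll_id_perm_comp_iff] at hσ hτ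
  have hsorted := Tuple.unique_monotone hσ hτ
  funext i
  have h := congrFun hsorted (σ (x i))
  simp only [Equiv.Perm.coe_inv, Function.comp_apply, Equiv.symm_apply_apply] at h
  exact τ.symm_apply_eq.1 (eq_apply_of_firstOcc_eq h.symm)

end Symmetry

/-- Global value precedence breaks all symmetry among fully interchangeable
values: every sequence has exactly one value-permuted variant satisfying the
global precedence constraint `Prec([0,…,m-1], ·)`. -/
theorem precAll_breaks_all_value_symmetry {n m : ℕ} (x : Fin n → Fin m) :
    ∃! y : Fin n → Fin m,
      (∃ σ : Equiv.Perm (Fin m), y = σ ∘ x) ∧ PrecAll (id : Fin m → Fin m) y := by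
  refine ⟨_, ⟨⟨_, rfl⟩, precAll_id_sort_inv_comp x⟩, ?_⟩
  rintro _ ⟨⟨τ, rfl⟩, hτ⟩
  exact perm_comp_eq_of_precAll_id hτ (precAll_id_sort_inv_comp x)
end

section
/- The IncreasingSeq constraint breaks all symmetry when both variables and values are fully interchangeable: let n ≥ 1, and say y : Fin n → Fin m satisfies IncreasingSeq iff (1) y 0 = 0; (2) for every i with i+1 < n, y (i+1) = y i or (y i : ℕ) + 1 = (y (i+1) : ℕ); and (3) for every j with j+1 < m, the number of indices i with y i = j+1 is at most the number of indices i with y i = j. Then for every x : Fin n → Fin m there is exactly one y : Fin n → Fin m such that y satisfies IncreasingSeq and y = τ ∘ x ∘ σ for some permutation σ of Fin n and permutation τ of Fin m. -/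
/-- The `IncreasingSeq` constraint: the sequence starts with value `0`,
consecutive entries are equal or increase by exactly one, and the number of
occurrences of each value is monotonically nonincreasing along the values. -/
def IncreasingSeq {n m : ℕ} (hn : 0 < n) (y : Fin n → Fin m) : Prop :=
  (y ⟨0, hn⟩ : ℕ) = 0 ∧
  (∀ (i : Fin n) (h : (i : ℕ) + 1 < n),
    y ⟨(i : ℕ) + 1, h⟩ = y i ∨ (y i : ℕ) + 1 = (y ⟨(i : ℕ) + 1, h⟩ : ℕ)) ∧
  (∀ j : ℕ, j + 1 < m →
    (Finset.univ.filter (fun i : Fin n => (y i : ℕ) = j + 1)).card ≤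
      (Finset.univ.filter (fun i : Fin n => (y i : ℕ) = j)).card)

/-!
Write `c_y j = fiberCard y j` for the number of positions where `y` takes the value `j`.
`IncreasingSeq` says exactly that `y` is monotone and `c_y` is antitone: an antitone `c_y` makes
the range of `y` a lower set, so a monotone `y` starts at `0` and never skips a value. The action
replaces `c_x` by `c_x ∘ τ⁻¹`, so a representative is found by sorting `c_x` decreasingly and then
sorting `x`. Conversely, an antitone `c_y` is determined by the multiset of its values, which is
invariant under the action, and a monotone `y` is determined by `c_y`.
-/

open Finset

section FiberCard

variable {α α' β β' : Type*} [Fintype α] [Fintype α'] [DecidableEq β] [DecidableEq β']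

def fiberCard (f : α → β) (b : β) : ℕ := #{a | f a = b}

lemma count_univ_val_map_eq_fiberCard (f : α → β) (b : β) :
    (univ.val.map f).count b = fiberCard f b := by
  simp [Multiset.count_map, fiberCard, Finset.card, eq_comm]

lemma fiberCard_comp_equiv (τ : β ≃ β') (f : α → β) (σ : α' ≃ α) :
    fiberCard (τ ∘ f ∘ σ) = fiberCard f ∘ τ.symm := by
  funext b
  exact card_equiv σ (by simp [← Equiv.eq_symm_apply])

lemma isLowerSet_range_of_antitone_fiberCard [Preorder β] {f : α → β}
    (hf : Antitone (fiberCard f)) : IsLowerSet (Set.range f) := by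
  rintro _ b hb ⟨a, rfl⟩
  have hpos : 0 < fiberCard f (f a) := card_pos.2 ⟨a, by simp⟩
  obtain ⟨a', ha'⟩ := card_pos.1 (hpos.trans_le (hf hb))
  exact ⟨a', (mem_filter.1 ha').2⟩

lemma Monotone.eq_of_fiberCard_eq {n : ℕ} [LinearOrder β] {f g : Fin n → β}
    (hf : Monotone f) (hg : Monotone g) (h : fiberCard f = fiberCard g) : f = g := by
  have hperm : (List.ofFn f).Perm (List.ofFn g) := by
    rw [← Multiset.coe_eq_coe, ← Fin.univ_val_map, ← Fin.univ_val_map]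
    ext b
    simp only [count_univ_val_map_eq_fiberCard, h]
  exact List.ofFn_injective <|
    hperm.eq_of_pairwise' hf.sortedLE_ofFn.pairwise hg.sortedLE_ofFn.pairwise

end FiberCard

lemma Monotone.wcovBy_of_covBy {α β : Type*} [LinearOrder α] [Preorder β] {f : α → β}
    (hf : Monotone f) (hrange : IsLowerSet (Set.range f)) {a b : α} (hab : a ⋖ b) :
    f a ⩿ f b := by
  refine ⟨hf hab.le, fun c hac hcb => ?_⟩
  obtain ⟨d, rfl⟩ := hrange hcb.le ⟨b, rfl⟩
  rcases le_or_gt d a with hda | had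
  · exact (hf hda).not_gt hac
  · exact (hf (hab.ge_of_gt had)).not_gt hcb

lemma Fin.forall_covBy_iff {n : ℕ} {P : Fin n → Fin n → Prop} :
    (∀ i j : Fin n, i ⋖ j → P i j) ↔ ∀ (i : Fin n) (h : (i : ℕ) + 1 < n), P i ⟨i + 1, h⟩ := by
  refine ⟨fun hP i h => hP i _ (by simp [Fin.covBy_iff]), fun hP i j hij => ?_⟩
  obtain ⟨j, hj⟩ := j
  obtain rfl : (i : ℕ) + 1 = j := by simpa [Fin.covBy_iff] using hij
  exact hP i hj

lemma increasingSeq_iff_covBy {n m : ℕ} (hn : 0 < n) (y : Fin n → Fin m) :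
    IncreasingSeq hn y ↔ (y ⟨0, hn⟩ : ℕ) = 0 ∧ (∀ i j : Fin n, i ⋖ j → y i ⩿ y j) ∧
      Antitone (fiberCard y) := by
  have hcard (j : Fin m) : #{i | (y i : ℕ) = j} = fiberCard y j := by
    simp [fiberCard, Fin.ext_iff]
  rw [antitone_iff_forall_covBy, Fin.forall_covBy_iff, Fin.forall_covBy_iff]
  simp only [IncreasingSeq, wcovBy_iff_eq_or_covBy, Fin.covBy_iff, Nat.covBy_iff_add_one_eq]
  refine and_congr_right' (and_congr (forall₂_congr fun i h => by rw [eq_comm]) ?_)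
  simp only [Fin.forall_iff, ← hcard]
  exact forall_congr' fun j => ⟨fun h _ => h, fun h hj => h (by omega) hj⟩

lemma increasingSeq_iff_monotone_antitone {n m : ℕ} (hn : 0 < n) (y : Fin n → Fin m) :
    IncreasingSeq hn y ↔ Monotone y ∧ Antitone (fiberCard y) := by
  rw [increasingSeq_iff_covBy]
  constructor
  · rintro ⟨-, hstep, hcount⟩
    exact ⟨(monotone_iff_forall_covBy y).2 fun i j hij => (hstep i j hij).le, hcount⟩
  · rintro ⟨hmono, hcount⟩
    have hlower := isLowerSet_range_of_antitone_fiberCard hcount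
    refine ⟨?_, fun i j hij => hmono.wcovBy_of_covBy hlower hij, hcount⟩
    have h0 : (⟨0, (y ⟨0, hn⟩).pos⟩ : Fin m) ≤ y ⟨0, hn⟩ := Nat.zero_le _
    obtain ⟨i, hi⟩ := hlower h0 ⟨_, rfl⟩
    have hle : y ⟨0, hn⟩ ≤ y i := hmono (Nat.zero_le i.val)
    rw [hi] at hle
    exact Nat.le_zero.1 hle

lemma exists_perm_monotone_antitone_fiberCard {n m : ℕ} (x : Fin n → Fin m) :
    ∃ (σ : Equiv.Perm (Fin n)) (τ : Equiv.Perm (Fin m)),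
      Monotone (τ ∘ x ∘ σ) ∧ Antitone (fiberCard (τ ∘ x ∘ σ)) := by
  set τ : Equiv.Perm (Fin m) := (Tuple.sort (OrderDual.toDual ∘ fiberCard x)).symm
  refine ⟨Tuple.sort (τ ∘ x), τ, Tuple.monotone_sort (τ ∘ x), ?_⟩
  rw [fiberCard_comp_equiv, Equiv.symm_symm]
  exact Tuple.monotone_sort (OrderDual.toDual ∘ fiberCard x)

lemma eq_of_monotone_antitone_fiberCard {n m : ℕ} {y y' : Fin n → Fin m}
    (σ : Equiv.Perm (Fin n)) (τ : Equiv.Perm (Fin m)) (h : y' = τ ∘ y ∘ σ)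
    (hy : Monotone y) (hy' : Monotone y') (hcy : Antitone (fiberCard y))
    (hcy' : Antitone (fiberCard y')) : y' = y := by
  have hc : fiberCard y' = fiberCard y ∘ τ.symm := h ▸ fiberCard_comp_equiv τ y σ
  have hτ : fiberCard y ∘ τ.symm = fiberCard y ∘ Equiv.refl _ :=
    Tuple.unique_antitone (hc ▸ hcy') hcy
  exact hy'.eq_of_fiberCard_eq hy (hc.trans hτ)

/-- The `IncreasingSeq` constraint breaks all symmetry when both variables and
values are fully interchangeable: every sequence has exactly one variant under
the joint action of variable and value permutations satisfying
`IncreasingSeq`. -/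
theorem increasingSeq_breaks_all_symmetry {n m : ℕ} (hn : 0 < n) (x : Fin n → Fin m) :
    ∃! y : Fin n → Fin m,
      IncreasingSeq hn y ∧
      ∃ (σ : Equiv.Perm (Fin n)) (τ : Equiv.Perm (Fin m)), y = τ ∘ x ∘ σ := by
  simp only [increasingSeq_iff_monotone_antitone]
  obtain ⟨σ, τ, hmono, hcount⟩ := exists_perm_monotone_antitone_fiberCard x
  refine ⟨τ ∘ x ∘ σ, ⟨⟨hmono, hcount⟩, σ, τ, rfl⟩, ?_⟩
  rintro _ ⟨⟨hmono', hcount'⟩, σ', τ', rfl⟩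
  refine eq_of_monotone_antitone_fiberCard (σ'.trans σ.symm) (τ.symm.trans τ') ?_
    hmono hmono' hcount hcount'
  funext i
  simp
end

section
/- Combining the reflection symmetry-breaking lexicographic constraint with value precedence does not break all symmetry when a sequence has variable reflection symmetry and interchangeable values: the sequences x = [1,2,1,1,2] and y = [1,2,2,1,2] (of length 5 over values {1,2}) are distinct, both satisfy the reflection-breaking constraint [x_1, x_2] ≤lex [x_5, x_4] (comparing the first half with the reversed second half, omitting the middle element), both satisfy Prec(1,2,·), and yet y is obtained from x by reversing the sequence and then swapping the values 1 and 2. -/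
/-- The reflection symmetry-breaking constraint for an odd-length sequence of
five variables: `[X₁, X₂] ≤lex [X₅, X₄]` (the middle element is omitted). -/
def ReflBreak (x : Fin 5 → ℕ) : Prop :=
  x 0 < x 4 ∨ (x 0 = x 4 ∧ x 1 ≤ x 3)

instance (x : Fin 5 → ℕ) : Decidable (ReflBreak x) :=
  inferInstanceAs (Decidable (_ ∨ _))

theorem prec_of_apply_zero_eq {V : Type*} [DecidableEq V] {n : ℕ} {a b : V} (hab : a ≠ b)
    {x : Fin (n + 1) → V} (h0 : x 0 = a) : Prec a b x := fun _ hi =>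
  ⟨0, Fin.pos_of_ne_zero fun hi0 => hab (h0.symm.trans (hi0 ▸ hi)), h0⟩

/-- Combining the reflection symmetry-breaking lexicographic constraint with
value precedence does not break all symmetry: `[1,2,1,1,2]` and `[1,2,2,1,2]`
both satisfy both constraints, yet the second is obtained from the first by
reversing the sequence and swapping the values `1` and `2`. -/
theorem reflection_and_prec_do_not_break_all_symmetry :
    let x : Fin 5 → ℕ := ![1, 2, 1, 1, 2]
    let y : Fin 5 → ℕ := ![1, 2, 2, 1, 2]
    x ≠ y ∧
    ReflBreak x ∧ ReflBreak y ∧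
    Prec (1 : ℕ) 2 x ∧ Prec (1 : ℕ) 2 y ∧
    y = (Equiv.swap (1 : ℕ) 2) ∘ x ∘ (Fin.revPerm : Equiv.Perm (Fin 5)) := by
  intro x y
  exact ⟨by decide, by decide, by decide, prec_of_apply_zero_eq (by decide) rfl,
    prec_of_apply_zero_eq (by decide) rfl, by decide⟩
end
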